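/- arXiv:1104.4013 — 2 statements merged into one kernel-verified Lean document; each statement's English description precedes it below -/
import Mathlib

section
/- Let C be an even binary (2^m - 3, 2^{2^m-m-4}, 4) code and define E = {x ∈ F_2^n : d(x, complement of C) ≥ 3, wt(x) even} and Ē = {x ∈ F_2^n : d(x, C) ≥ 3, wt(x) odd}. Then the average number over x ∈ Ē of neighbors of x (words at Hamming distance 1) lying in E equals 1; that is, |{(x,y) : x ∈ Ē, y ∈ E, d(x,y) = 1}| = |Ē|. -/
/-!
Write `n = |ι|`, `K = |C|` and `e i` for the unit vectors. As `C` is even with minimum distance at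
least `3`, the odd words split into `oddFar C` and the `n K` words `c + e k` at distance `1` from
`C`; since `2 ^ (n - 1) = (n + 3) K`, this gives `|oddFar C| = 3 K`. As `n` is odd, `y ∈ evenFar C`
iff `y + 1 ∈ oddFar C`, so the pairs to be counted are the `(x, i)` with `x` and `x + e i + 1` in
`oddFar C`. For each `i`, the involution `x ↦ x + e i + 1` of the odd words turns this count into
`n |oddFar C| - n² K + N`, where `N` is the number of `(i, k, l, c)` with `c ∈ C` and
`c + 1 + e i + e k + e l ∈ C`.

`N` is found by Fourier analysis on `(ZMod 2)ⁿ`: for `S v = ∑ c ∈ C, (-1) ^ (v ⬝ᵥ c)` and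
`s v = n - 2 wt v`, the sums `∑ v, S v ^ 2 * s v ^ j * (-1) ^ (v ⬝ᵥ t)` are `2 ^ n` times walk
counts. Delsarte's inequality, tested against two cubics that are nonnegative at `s v` for every
nonzero even `v` (this is where `n ≡ 1 mod 4` enters), gives matching bounds
`N = (n² - 3n + 3) K`; hence the count is `3nK - n²K + N = 3K = |oddFar C|`.
-/

open Finset

lemma Finset.card_filter_mem_add_card_of_involutive {α : Type*} [DecidableEq α] {f : α → α}
    (hf : Function.Involutive f) {A B : Finset α} (hAB : Disjoint A B)
    (hmaps : ∀ x ∈ A ∪ B, f x ∈ A ∪ B) :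
    #{x ∈ A | f x ∈ A} + #B = #A + #{x ∈ B | f x ∈ B} := by
  have hcompl : ∀ x ∈ A ∪ B, f x ∉ A ↔ f x ∈ B := fun x hx =>
    ⟨(mem_union.mp (hmaps x hx)).resolve_left, fun h => disjoint_right.mp hAB h⟩
  have hA : #{x ∈ A | f x ∈ A} + #{x ∈ A | f x ∈ B} = #A := by
    rw [← card_filter_add_card_filter_not (s := A) (fun x => f x ∈ A),
      filter_congr fun x hx => hcompl x (mem_union_left B hx)]
  have hB : #{x ∈ B | f x ∈ A} + #{x ∈ B | f x ∈ B} = #B := by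
    rw [add_comm, ← card_filter_add_card_filter_not (s := B) (fun x => f x ∈ B),
      filter_congr fun x hx => (not_congr (hcompl x (mem_union_right A hx))).symm.trans not_not]
  have hswap : #{x ∈ A | f x ∈ B} = #{x ∈ B | f x ∈ A} :=
    card_nbij' f f (fun x hx => by simp_all [hf x]) (fun x hx => by simp_all [hf x])
      (fun x _ => hf x) (fun x _ => hf x)
  omega

namespace BinaryCode

section Words

variable {ι : Type*}

lemma neg_eq_self_of_zmod_two (x : ι → ZMod 2) : -x = x :=
  funext fun i => ZMod.neg_eq_self_mod_two (x i)

lemma sub_eq_add_of_zmod_two (x y : ι → ZMod 2) : x - y = x + y := by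
  rw [sub_eq_add_neg, neg_eq_self_of_zmod_two]

lemma add_add_cancel_left_of_zmod_two (x y : ι → ZMod 2) : x + (x + y) = y := by
  rw [← add_assoc, ← sub_eq_add_of_zmod_two x, sub_self, zero_add]

lemma add_add_cancel_right_of_zmod_two (x y : ι → ZMod 2) : x + y + y = x := by
  rw [add_assoc, ← sub_eq_add_of_zmod_two y, sub_self, add_zero]

lemma single_injective_of_zmod_two [DecidableEq ι] :
    Function.Injective fun i : ι => (Pi.single i 1 : ι → ZMod 2) :=
  fun i k h => (by simpa [Pi.single_apply] using congrFun h k : k = i).symm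

variable [Fintype ι]

lemma hammingDist_eq_hammingNorm_add (x y : ι → ZMod 2) :
    hammingDist x y = hammingNorm (x + y) := by
  rw [hammingDist_eq_hammingNorm, neg_eq_self_of_zmod_two, add_comm]

lemma natCast_hammingNorm (v : ι → ZMod 2) : (hammingNorm v : ZMod 2) = v ⬝ᵥ 1 := by
  have h : ∀ a : ZMod 2, a = if a ≠ 0 then 1 else 0 := by decide
  rw [dotProduct_one, sum_congr rfl fun i _ => h (v i), sum_boole]
  rfl

lemma even_hammingNorm_iff {v : ι → ZMod 2} : Even (hammingNorm v) ↔ v ⬝ᵥ 1 = 0 := by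
  rw [← ZMod.natCast_eq_zero_iff_even, natCast_hammingNorm]

lemma odd_hammingNorm_iff {v : ι → ZMod 2} : Odd (hammingNorm v) ↔ v ⬝ᵥ 1 = 1 := by
  rw [← ZMod.natCast_eq_one_iff_odd, natCast_hammingNorm]

lemma one_dotProduct_one_of_odd (hn : Odd (Fintype.card ι)) : (1 : ι → ZMod 2) ⬝ᵥ 1 = 1 := by
  simpa [dotProduct_one] using ZMod.natCast_eq_one_iff_odd.mpr hn

variable [DecidableEq ι]

lemma single_dotProduct_one (i : ι) : (Pi.single i 1 : ι → ZMod 2) ⬝ᵥ 1 = 1 := by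
  simp [single_dotProduct]

lemma hammingNorm_single_one (i : ι) : hammingNorm (Pi.single i 1 : ι → ZMod 2) = 1 := by
  simp [hammingNorm, Pi.single_apply, filter_eq']

lemma exists_eq_single_of_hammingNorm_eq_one {v : ι → ZMod 2} (hv : hammingNorm v = 1) :
    ∃ i, v = Pi.single i 1 := by
  obtain ⟨i, hi⟩ := card_eq_one.mp hv
  have hsupp : ∀ k, v k ≠ 0 ↔ k = i := fun k => by
    simpa using congrArg (k ∈ ·) hi
  refine ⟨i, funext fun k => ?_⟩
  have h : ∀ a : ZMod 2, a ≠ 0 → a = 1 := by decide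
  by_cases hk : k = i
  · subst hk; simpa using h _ ((hsupp k).mpr rfl)
  · simpa [hk] using (hsupp k).not.mpr hk

end Words

section Fourier

def chi (a : ZMod 2) : ℤ := if a = 0 then 1 else -1

lemma chi_zero : chi 0 = 1 := rfl

lemma chi_one : chi 1 = -1 := rfl

lemma chi_add (a b : ZMod 2) : chi (a + b) = chi a * chi b := by revert a b; decide

variable {ι : Type*} [Fintype ι]

def charSum (C : Finset (ι → ZMod 2)) (v : ι → ZMod 2) : ℤ := ∑ c ∈ C, chi (v ⬝ᵥ c)

def signSum (v : ι → ZMod 2) : ℤ := ∑ i, chi (v i)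

def pairCount (C : Finset (ι → ZMod 2)) (t : ι → ZMod 2) : ℕ := #{c ∈ C | c + t ∈ C}

variable {C : Finset (ι → ZMod 2)}

lemma signSum_eq (v : ι → ZMod 2) : signSum v = Fintype.card ι - 2 * hammingNorm v := by
  have h : ∀ a : ZMod 2, chi a = 1 - 2 * if a ≠ 0 then 1 else 0 := by decide
  simp only [signSum, h, sum_sub_distrib, ← mul_sum, sum_boole]
  simp [hammingNorm]

lemma signSum_emod_four_and_bounds (hn : Fintype.card ι % 4 = 1) {v : ι → ZMod 2} (hv : v ≠ 0)
    (he : Even (hammingNorm v)) :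
    signSum v % 4 = 1 ∧ 2 - (Fintype.card ι : ℤ) ≤ signSum v ∧ signSum v ≤ Fintype.card ι - 4 := by
  obtain ⟨k, hk⟩ := he
  have hpos := hammingNorm_pos_iff.mpr hv
  have hle : hammingNorm v ≤ Fintype.card ι := hammingNorm_le_card_fintype (x := v)
  rw [signSum_eq, hk]
  omega

variable (C) in
lemma charSum_zero : charSum C 0 = #C := by simp [charSum, chi]

variable (C) in
lemma pairCount_zero : pairCount C 0 = #C := by simp [pairCount]

lemma pairCount_eq_zero (hC : ∀ c ∈ C, Even (hammingNorm c)) {t : ι → ZMod 2}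
    (ht : t ⬝ᵥ 1 ≠ 0) : pairCount C t = 0 := by
  refine card_eq_zero.mpr (filter_eq_empty_iff.mpr fun c hc hct => ht ?_)
  have h := even_hammingNorm_iff.mp (hC _ hct)
  rwa [add_dotProduct, even_hammingNorm_iff.mp (hC c hc), zero_add] at h

variable [DecidableEq ι]

lemma sum_chi_dotProduct (u : ι → ZMod 2) :
    ∑ v : ι → ZMod 2, chi (v ⬝ᵥ u) = if u = 0 then 2 ^ Fintype.card ι else 0 := by
  split_ifs with hu
  · simp [hu, chi]
  obtain ⟨i, hi⟩ : ∃ i, u i ≠ 0 := by by_contra! h; exact hu (funext h)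
  have hui : u i = 1 := by revert hi; generalize u i = a; revert a; decide
  have hflip : ∀ v, chi ((v + Pi.single i 1) ⬝ᵥ u) = -chi (v ⬝ᵥ u) := fun v => by
    rw [add_dotProduct, chi_add, single_dotProduct, hui, one_mul, chi_one, mul_neg_one]
  have := Equiv.sum_comp (Equiv.addRight (Pi.single i 1 : ι → ZMod 2)) fun v => chi (v ⬝ᵥ u)
  simp only [Equiv.coe_addRight, hflip, sum_neg_distrib] at this
  linarith

variable (C) in
lemma sum_charSum_sq_mul_chi (t : ι → ZMod 2) :
    ∑ v, charSum C v ^ 2 * chi (v ⬝ᵥ t) = 2 ^ Fintype.card ι * pairCount C t := by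
  have expand : ∀ v, charSum C v ^ 2 * chi (v ⬝ᵥ t)
      = ∑ c ∈ C, ∑ c' ∈ C, chi (v ⬝ᵥ (c' + (c + t))) := fun v => by
    rw [charSum, sq, sum_mul_sum, sum_mul]
    refine sum_congr rfl fun c _ => ?_
    rw [sum_mul]
    refine sum_congr rfl fun c' _ => ?_
    rw [dotProduct_add, dotProduct_add, chi_add, chi_add]
    ring
  have hzero : ∀ c c' : ι → ZMod 2, c' + (c + t) = 0 ↔ c' = c + t := fun c c' => by
    rw [add_eq_zero_iff_eq_neg, neg_eq_self_of_zmod_two]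
  calc _ = ∑ c ∈ C, ∑ c' ∈ C, ∑ v, chi (v ⬝ᵥ (c' + (c + t))) := by
        simp only [expand]
        rw [sum_comm]
        exact sum_congr rfl fun c _ => sum_comm
    _ = _ := by
        simp only [sum_chi_dotProduct, hzero, sum_ite_eq', pairCount, card_filter]
        push_cast
        rw [mul_sum]
        exact sum_congr rfl fun c _ => by split_ifs <;> simp

/-- `walkCount C j t` counts the tuples `(i₁, …, iⱼ, c)` with `c ∈ C` and
`c + t + e i₁ + ⋯ + e iⱼ ∈ C`. -/
def walkCount (C : Finset (ι → ZMod 2)) : ℕ → (ι → ZMod 2) → ℕ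
  | 0, t => pairCount C t
  | j + 1, t => ∑ i, walkCount C j (t + Pi.single i 1)

lemma walkCount_zero_zero : walkCount C 0 0 = #C := pairCount_zero C

lemma signSum_mul_chi (v t : ι → ZMod 2) :
    signSum v * chi (v ⬝ᵥ t) = ∑ i, chi (v ⬝ᵥ (t + Pi.single i 1)) := by
  simp only [signSum, mul_sum, dotProduct_add, chi_add, dotProduct_single, mul_one, mul_comm]

variable (C) in
lemma sum_charSum_sq_mul_signSum_pow (j : ℕ) (t : ι → ZMod 2) :
    ∑ v, charSum C v ^ 2 * signSum v ^ j * chi (v ⬝ᵥ t)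
      = 2 ^ Fintype.card ι * walkCount C j t := by
  induction j generalizing t with
  | zero => simpa [walkCount] using sum_charSum_sq_mul_chi C t
  | succ j ih =>
    calc _ = ∑ v, ∑ i, charSum C v ^ 2 * signSum v ^ j * chi (v ⬝ᵥ (t + Pi.single i 1)) :=
          sum_congr rfl fun v _ => by rw [← mul_sum, ← signSum_mul_chi]; ring
      _ = _ := by rw [sum_comm]; simp only [ih, walkCount]; push_cast; rw [mul_sum]

lemma walkCount_eq_zero (hC : ∀ c ∈ C, Even (hammingNorm c)) (j : ℕ) {t : ι → ZMod 2}
    (ht : t ⬝ᵥ 1 + j ≠ 0) : walkCount C j t = 0 := by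
  induction j generalizing t with
  | zero => exact pairCount_eq_zero hC (by simpa using ht)
  | succ j ih =>
    refine sum_eq_zero fun i _ => ih ?_
    rwa [add_dotProduct, single_dotProduct_one, add_assoc, add_comm 1, ← Nat.cast_succ]

end Fourier

section Code

variable {ι : Type*} [Fintype ι] [DecidableEq ι]

def MinDistAtLeast (d : ℕ) (C : Finset (ι → ZMod 2)) : Prop :=
  ∀ c ∈ C, ∀ c' ∈ C, c ≠ c' → d ≤ hammingDist c c'

variable {C : Finset (ι → ZMod 2)}

lemma eq_and_eq_of_add_single_eq_add_single
    (hd : MinDistAtLeast 3 C) {c c' : ι → ZMod 2}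
    (hc : c ∈ C) (hc' : c' ∈ C) {k l : ι} (h : c + Pi.single k 1 = c' + Pi.single l 1) :
    c = c' ∧ k = l := by
  obtain rfl | hne := eq_or_ne c c'
  · exact ⟨rfl, single_injective_of_zmod_two (add_left_cancel h)⟩
  have hsum : c + c' = Pi.single l 1 + Pi.single k 1 := by
    rw [← sub_eq_add_of_zmod_two, ← sub_eq_add_of_zmod_two]
    exact sub_eq_sub_iff_add_eq_add.mpr (h.trans (add_comm _ _))
  have hle := hammingDist_triangle (Pi.single l 1 : ι → ZMod 2) 0 (Pi.single k 1)
  rw [hammingDist_eq_hammingNorm_add, ← hsum, ← hammingDist_eq_hammingNorm_add,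
    hammingDist_zero_right, hammingDist_zero_left, hammingNorm_single_one,
    hammingNorm_single_one] at hle
  exact absurd (hd c hc c' hc' hne) (by omega)

lemma card_filter_add_single_mem_le_one
    (hd : MinDistAtLeast 3 C) (x : ι → ZMod 2) :
    #{l | x + Pi.single l 1 ∈ C} ≤ 1 := by
  refine card_le_one.mpr fun l hl l' hl' => ?_
  simp only [mem_filter, mem_univ, true_and] at hl hl'
  refine (eq_and_eq_of_add_single_eq_add_single hd hl hl' ?_).2
  rw [add_add_cancel_right_of_zmod_two, add_add_cancel_right_of_zmod_two]

lemma pairCount_single_add_single (hd : MinDistAtLeast 3 C)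
    (i k : ι) : pairCount C (Pi.single i 1 + Pi.single k 1) = if i = k then #C else 0 := by
  split_ifs with hik
  · rw [hik, ← sub_eq_add_of_zmod_two, sub_self, pairCount_zero]
  · refine card_eq_zero.mpr (filter_eq_empty_iff.mpr fun c hc hc' => hik ?_)
    refine (eq_and_eq_of_add_single_eq_add_single hd hc hc' ?_).2
    rw [← add_assoc, add_add_cancel_right_of_zmod_two]

lemma walkCount_two_zero (hd : MinDistAtLeast 3 C) :
    walkCount C 2 0 = Fintype.card ι * #C := by
  simp [walkCount, pairCount_single_add_single hd]

lemma walkCount_one_one_le (hd : MinDistAtLeast 3 C) :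
    walkCount C 1 1 ≤ #C :=
  calc walkCount C 1 1 = ∑ c ∈ C, #{l | c + 1 + Pi.single l 1 ∈ C} := by
        simp only [walkCount, pairCount, card_filter]
        rw [sum_comm]
        simp only [add_assoc]
    _ ≤ ∑ c ∈ C, 1 := sum_le_sum fun c _ => card_filter_add_single_mem_le_one hd _
    _ = #C := by simp

end Code

section LinearProgramming

variable {ι : Type*} [Fintype ι] [DecidableEq ι] {C : Finset (ι → ZMod 2)}

-- The weight `1 + chi (v ⬝ᵥ 1)` is `2` on even words and `0` on odd ones.
variable (C) in
lemma sum_evenWeight_mul_signSum_pow (j : ℕ) :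
    ∑ v, charSum C v ^ 2 * (1 + chi (v ⬝ᵥ 1)) * signSum v ^ j
      = 2 ^ Fintype.card ι * ((walkCount C j 0 : ℤ) + walkCount C j 1) := by
  have h : ∀ v : ι → ZMod 2, charSum C v ^ 2 * (1 + chi (v ⬝ᵥ 1)) * signSum v ^ j
      = charSum C v ^ 2 * signSum v ^ j * chi (v ⬝ᵥ 0)
        + charSum C v ^ 2 * signSum v ^ j * chi (v ⬝ᵥ 1) := fun v => by
    rw [dotProduct_zero, chi_zero]; ring
  simp only [h, sum_add_distrib, sum_charSum_sq_mul_signSum_pow]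
  ring

variable (C) in
lemma sum_evenWeight_mul_cubic (a b c d : ℤ) :
    ∑ v, charSum C v ^ 2 * (1 + chi (v ⬝ᵥ 1))
        * (a * signSum v ^ 3 + b * signSum v ^ 2 + c * signSum v + d)
      = 2 ^ Fintype.card ι * (a * (walkCount C 3 0 + walkCount C 3 1)
        + b * (walkCount C 2 0 + walkCount C 2 1) + c * (walkCount C 1 0 + walkCount C 1 1)
        + d * (walkCount C 0 0 + walkCount C 0 1)) := by
  have h : ∀ v : ι → ZMod 2, charSum C v ^ 2 * (1 + chi (v ⬝ᵥ 1))
        * (a * signSum v ^ 3 + b * signSum v ^ 2 + c * signSum v + d)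
      = a * (charSum C v ^ 2 * (1 + chi (v ⬝ᵥ 1)) * signSum v ^ 3)
        + b * (charSum C v ^ 2 * (1 + chi (v ⬝ᵥ 1)) * signSum v ^ 2)
        + c * (charSum C v ^ 2 * (1 + chi (v ⬝ᵥ 1)) * signSum v ^ 1)
        + d * (charSum C v ^ 2 * (1 + chi (v ⬝ᵥ 1)) * signSum v ^ 0) := fun v => by ring
  simp only [h, sum_add_distrib, ← mul_sum, sum_evenWeight_mul_signSum_pow]
  ring

variable (C) in
lemma two_mul_card_sq_mul_le_sum (p : ℤ → ℤ)
    (hp : ∀ v : ι → ZMod 2, v ≠ 0 → Even (hammingNorm v) → 0 ≤ p (signSum v)) :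
    2 * #C ^ 2 * p (Fintype.card ι)
      ≤ ∑ v, charSum C v ^ 2 * (1 + chi (v ⬝ᵥ 1)) * p (signSum v) := by
  rw [← add_sum_erase _ _ (mem_univ 0)]
  have h0 : charSum C 0 ^ 2 * (1 + chi ((0 : ι → ZMod 2) ⬝ᵥ 1)) * p (signSum (0 : ι → ZMod 2))
      = 2 * #C ^ 2 * p (Fintype.card ι) := by
    rw [charSum_zero, signSum_eq, hammingNorm_zero, zero_dotProduct, chi_zero,
      Nat.cast_zero, mul_zero, sub_zero]
    ring
  refine h0.ge.trans (le_add_of_nonneg_right (sum_nonneg fun v hv => ?_))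
  rcases Nat.even_or_odd (hammingNorm v) with he | ho
  · rw [even_hammingNorm_iff.mp he]
    exact mul_nonneg (by rw [chi_zero]; positivity) (hp v (ne_of_mem_erase hv) he)
  · simp [odd_hammingNorm_iff.mp ho, chi_one]

lemma mul_nonneg_of_emod_four_eq_one {s : ℤ} (hs : s % 4 = 1) : 0 ≤ (s - 1) * (s + 3) := by
  rcases (by omega : 1 ≤ s ∨ s ≤ -3) with h | h
  · exact mul_nonneg (by linarith) (by linarith)
  · exact mul_nonneg_of_nonpos_of_nonpos (by linarith) (by linarith)

lemma two_mul_card_sq_mul_cubic_le (hn : Odd (Fintype.card ι))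
    (hC : ∀ c ∈ C, Even (hammingNorm c)) (hd : MinDistAtLeast 3 C) (a b c d : ℤ)
    (hp : ∀ v : ι → ZMod 2, v ≠ 0 → Even (hammingNorm v) →
      0 ≤ a * signSum v ^ 3 + b * signSum v ^ 2 + c * signSum v + d) :
    2 * #C ^ 2 * (a * (Fintype.card ι : ℤ) ^ 3 + b * (Fintype.card ι : ℤ) ^ 2
        + c * Fintype.card ι + d)
      ≤ 2 ^ Fintype.card ι * (a * walkCount C 3 1 + b * (Fintype.card ι * #C)
        + c * walkCount C 1 1 + d * #C) := by
  have hone := one_dotProduct_one_of_odd hn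
  have h := (two_mul_card_sq_mul_le_sum C (fun s => a * s ^ 3 + b * s ^ 2 + c * s + d)
    hp).trans_eq (sum_evenWeight_mul_cubic C a b c d)
  rw [walkCount_eq_zero hC 3 (t := 0) (by rw [zero_dotProduct, zero_add]; decide), walkCount_eq_zero hC 1 (t := 0) (by simp),
    walkCount_eq_zero hC 0 (t := 1) (by simp [hone]),
    walkCount_eq_zero hC 2 (t := 1) (by rw [hone]; decide), walkCount_two_zero hd,
    walkCount_zero_zero] at h
  simpa using h

theorem walkCount_three_one (hn : Fintype.card ι % 4 = 1) (hC : ∀ c ∈ C, Even (hammingNorm c))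
    (hd : MinDistAtLeast 3 C) (hK : 2 ^ Fintype.card ι = 2 * (Fintype.card ι + 3) * #C) :
    (walkCount C 3 1 : ℤ) = ((Fintype.card ι : ℤ) ^ 2 - 3 * Fintype.card ι + 3) * #C := by
  have hodd : Odd (Fintype.card ι) := Nat.odd_iff.mpr (by omega)
  have h5 : 5 ≤ Fintype.card ι := by
    have : Fintype.card ι ≠ 1 := fun h => by rw [h] at hK; omega
    omega
  have hKz : (2 : ℤ) ^ Fintype.card ι = 2 * (Fintype.card ι + 3) * #C := by exact_mod_cast hK
  have hN1 : (0 : ℤ) ≤ #C - walkCount C 1 1 := by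
    simpa using (Int.ofNat_le.mpr (walkCount_one_one_le hd))
  obtain ⟨n, hn_def⟩ : ∃ n : ℤ, Fintype.card ι = n := ⟨_, rfl⟩
  -- `(s - 1) (s + 3) ≥ 0` for `s ≡ 1 mod 4`, and `2 - n ≤ s ≤ n - 4`: both cubics are admissible,
  -- and the two bounds they give on `walkCount C 3 1` coincide.
  have upper := two_mul_card_sq_mul_cubic_le hodd hC hd (-1) (n - 6) (2 * n - 5) (-(3 * n - 12))
    fun v hv he => by
      obtain ⟨hs, -, hs'⟩ := signSum_emod_four_and_bounds hn hv he
      have := mul_nonneg (mul_nonneg_of_emod_four_eq_one hs) (by linarith : 0 ≤ n - 4 - signSum v)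
      linarith
  have lower := two_mul_card_sq_mul_cubic_le hodd hC hd 1 n (2 * n - 7) (-(3 * n - 6))
    fun v hv he => by
      obtain ⟨hs, hs', -⟩ := signSum_emod_four_and_bounds hn hv he
      have := mul_nonneg (mul_nonneg_of_emod_four_eq_one hs) (by linarith : 0 ≤ signSum v + n - 2)
      linarith
  rw [hKz, hn_def] at upper lower
  rw [hn_def]
  have h5' : (5 : ℤ) ≤ n := by rw [← hn_def]; exact_mod_cast h5
  have hpos : 0 < 2 * (n + 3) * (#C : ℤ) := by
    have : (0 : ℤ) < 2 ^ Fintype.card ι := by positivity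
    rw [hKz, hn_def] at this
    exact this
  refine le_antisymm ?_ ?_
  · nlinarith [mul_nonneg hpos.le (mul_nonneg (by linarith : (0 : ℤ) ≤ 2 * n - 5) hN1)]
  · nlinarith [mul_nonneg hpos.le (mul_nonneg (by linarith : (0 : ℤ) ≤ 2 * n - 7) hN1)]

end LinearProgramming

section Counting

variable {ι : Type*} [Fintype ι] [DecidableEq ι] {C : Finset (ι → ZMod 2)}

variable (C) in
def covered : Finset (ι → ZMod 2) := (C ×ˢ univ).image fun p => p.1 + Pi.single p.2 1

lemma mem_covered {x : ι → ZMod 2} : x ∈ covered C ↔ ∃ l, x + Pi.single l 1 ∈ C := by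
  simp only [covered, mem_image, mem_product, mem_univ, and_true, Prod.exists]
  constructor
  · rintro ⟨c, l, hc, rfl⟩
    exact ⟨l, by rwa [add_add_cancel_right_of_zmod_two]⟩
  · rintro ⟨l, hl⟩
    exact ⟨_, l, hl, add_add_cancel_right_of_zmod_two x _⟩

lemma injOn_add_single (hd : MinDistAtLeast 3 C) :
    Set.InjOn (fun p : (ι → ZMod 2) × ι => p.1 + Pi.single p.2 1) ↑(C ×ˢ (univ : Finset ι)) := by
  rintro ⟨c, k⟩ hc ⟨c', l⟩ hc' h
  obtain ⟨rfl, rfl⟩ := eq_and_eq_of_add_single_eq_add_single hd (mem_product.mp hc).1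
    (mem_product.mp hc').1 h
  rfl

lemma card_covered (hd : MinDistAtLeast 3 C) :
    #(covered C) = #C * Fintype.card ι := by
  rw [covered, card_image_of_injOn (injOn_add_single hd), card_product, card_univ]

lemma sum_covered (hd : MinDistAtLeast 3 C)
    (f : (ι → ZMod 2) → ℕ) : ∑ y ∈ covered C, f y = ∑ c ∈ C, ∑ k, f (c + Pi.single k 1) := by
  rw [covered, sum_image (injOn_add_single hd), sum_product]

lemma card_filter_add_single_mem (hd : MinDistAtLeast 3 C)
    (x : ι → ZMod 2) : #{l | x + Pi.single l 1 ∈ C} = if x ∈ covered C then 1 else 0 := by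
  split_ifs with hx
  · obtain ⟨l, hl⟩ := mem_covered.mp hx
    exact le_antisymm (card_filter_add_single_mem_le_one hd x) (card_pos.mpr ⟨l, by simpa using hl⟩)
  · exact card_eq_zero.mpr (filter_eq_empty_iff.mpr fun l _ hl => hx (mem_covered.mpr ⟨l, hl⟩))

lemma card_filter_covered (hd : MinDistAtLeast 3 C) (i : ι) :
    #{y ∈ covered C | y + (Pi.single i 1 + 1) ∈ covered C}
      = ∑ k, ∑ l, pairCount C (1 + Pi.single i 1 + Pi.single k 1 + Pi.single l 1) := by
  rw [card_filter]
  simp only [← card_filter_add_single_mem hd]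
  rw [sum_covered hd]
  simp only [pairCount, card_filter]
  rw [sum_comm]
  refine sum_congr rfl fun k _ => ?_
  rw [sum_comm]
  refine sum_congr rfl fun l _ => sum_congr rfl fun c _ => ?_
  congr 2
  abel

lemma sum_card_filter_covered (hd : MinDistAtLeast 3 C) :
    ∑ i, #{y ∈ covered C | y + (Pi.single i 1 + 1) ∈ covered C} = walkCount C 3 1 := by
  simp only [card_filter_covered hd, walkCount]

variable (C) in
def oddFar : Finset (ι → ZMod 2) :=
  {x | Odd (hammingNorm x) ∧ ∀ c ∈ C, 3 ≤ hammingDist x c}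

variable (C) in
def evenFar : Finset (ι → ZMod 2) :=
  {x | Even (hammingNorm x) ∧ ∀ c ∈ C, 3 ≤ hammingDist x (c + 1)}

lemma disjoint_oddFar_covered : Disjoint (oddFar C) (covered C) := by
  refine disjoint_left.mpr fun x hx hcov => ?_
  obtain ⟨l, hl⟩ := mem_covered.mp hcov
  have := (mem_filter.mp hx).2.2 _ hl
  rw [hammingDist_eq_hammingNorm_add, add_add_cancel_left_of_zmod_two,
    hammingNorm_single_one] at this
  omega

lemma oddFar_union_covered (hC : ∀ c ∈ C, Even (hammingNorm c)) :
    oddFar C ∪ covered C = ({x | Odd (hammingNorm x)} : Finset (ι → ZMod 2)) := by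
  ext x
  simp only [oddFar, mem_union, mem_filter, mem_univ, true_and]
  constructor
  · rintro (⟨hx, -⟩ | hx)
    · exact hx
    obtain ⟨l, hl⟩ := mem_covered.mp hx
    have h := even_hammingNorm_iff.mp (hC _ hl)
    rw [add_dotProduct, single_dotProduct_one, add_eq_zero_iff_eq_neg,
      ZMod.neg_eq_self_mod_two] at h
    exact odd_hammingNorm_iff.mpr h
  intro hx
  by_cases hfar : ∀ c ∈ C, 3 ≤ hammingDist x c
  · exact Or.inl ⟨hx, hfar⟩
  obtain ⟨c, hc, hlt⟩ : ∃ c ∈ C, hammingDist x c < 3 := by simpa using hfar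
  have hodd : Odd (hammingDist x c) := by
    rw [hammingDist_eq_hammingNorm_add, odd_hammingNorm_iff, add_dotProduct,
      odd_hammingNorm_iff.mp hx, even_hammingNorm_iff.mp (hC c hc), add_zero]
  obtain ⟨l, hl⟩ := exists_eq_single_of_hammingNorm_eq_one (v := x + c)
    (by obtain ⟨k, hk⟩ := hodd; rw [← hammingDist_eq_hammingNorm_add]; omega)
  exact Or.inr (mem_covered.mpr ⟨l, by rwa [← hl, add_add_cancel_left_of_zmod_two]⟩)

lemma two_mul_card_odd [Nonempty ι] :
    2 * #{x : ι → ZMod 2 | Odd (hammingNorm x)} = 2 ^ Fintype.card ι := by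
  obtain ⟨i⟩ := ‹Nonempty ι›
  have hswap : #{x : ι → ZMod 2 | Odd (hammingNorm x)}
      = #{x : ι → ZMod 2 | ¬Odd (hammingNorm x)} :=
    card_equiv (Equiv.addRight (Pi.single i 1)) fun x => by
      simp only [mem_filter, mem_univ, true_and, Equiv.coe_addRight, odd_hammingNorm_iff,
        add_dotProduct, single_dotProduct_one]
      generalize x ⬝ᵥ 1 = a
      revert a
      decide
  have htot := card_filter_add_card_filter_not (s := univ)
    fun x : ι → ZMod 2 => Odd (hammingNorm x)
  rw [card_univ, Fintype.card_fun, ZMod.card] at htot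
  omega

lemma card_oddFar [Nonempty ι] (hC : ∀ c ∈ C, Even (hammingNorm c))
    (hd : MinDistAtLeast 3 C)
    (hK : 2 ^ Fintype.card ι = 2 * (Fintype.card ι + 3) * #C) :
    #(oddFar C) = 3 * #C := by
  have h := card_union_of_disjoint (disjoint_oddFar_covered (C := C))
  rw [oddFar_union_covered hC, card_covered hd] at h
  have h2 := two_mul_card_odd (ι := ι)
  rw [hK, h] at h2
  linarith

lemma mem_evenFar_iff (hn : Odd (Fintype.card ι)) {x : ι → ZMod 2} :
    x ∈ evenFar C ↔ x + 1 ∈ oddFar C := by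
  have hdist : ∀ c, hammingDist x (c + 1) = hammingDist (x + 1) c := fun c => by
    rw [hammingDist_eq_hammingNorm_add, hammingDist_eq_hammingNorm_add, add_right_comm, add_assoc]
  simp only [evenFar, oddFar, mem_filter, mem_univ, true_and, hdist, even_hammingNorm_iff,
    odd_hammingNorm_iff, add_dotProduct, one_dotProduct_one_of_odd hn, add_eq_right]

lemma card_adjacent_eq_sum (hn : Odd (Fintype.card ι)) :
    #{p ∈ oddFar C ×ˢ evenFar C | hammingDist p.1 p.2 = 1}
      = ∑ i, #{x ∈ oddFar C | x + (Pi.single i 1 + 1) ∈ oddFar C} := by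
  calc _ = #{p ∈ oddFar C ×ˢ univ | p.1 + (Pi.single p.2 1 + 1) ∈ oddFar C} := by
        symm
        refine card_nbij (fun p => (p.1, p.1 + Pi.single p.2 1)) ?_ ?_ ?_
        · rintro ⟨x, i⟩ h
          simp only [mem_coe, mem_filter, mem_product, mem_univ, and_true] at h ⊢
          refine ⟨⟨h.1, (mem_evenFar_iff hn).mpr (by rw [add_assoc]; exact h.2)⟩, ?_⟩
          rw [hammingDist_eq_hammingNorm_add, add_add_cancel_left_of_zmod_two,
            hammingNorm_single_one]
        · rintro ⟨x, i⟩ - ⟨x', i'⟩ - h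
          simp only [Prod.mk.injEq] at h
          obtain ⟨rfl, h⟩ := h
          rw [single_injective_of_zmod_two (add_left_cancel h)]
        · rintro ⟨x, y⟩ h
          simp only [mem_coe, mem_filter, mem_product] at h
          obtain ⟨⟨hx, hy⟩, hxy⟩ := h
          rw [hammingDist_eq_hammingNorm_add] at hxy
          obtain ⟨i, hi⟩ := exists_eq_single_of_hammingNorm_eq_one hxy
          have hy' : y = x + Pi.single i 1 := by rw [← hi, add_add_cancel_left_of_zmod_two]
          subst hy'
          refine ⟨(x, i), ?_, rfl⟩
          simp only [mem_coe, mem_filter, mem_product, mem_univ, and_true]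
          exact ⟨hx, by rw [← add_assoc]; exact (mem_evenFar_iff hn).mp hy⟩
    _ = _ := by
        rw [card_filter, sum_product, sum_comm]
        simp only [card_filter]

theorem card_adjacent_oddFar_evenFar (hn : Fintype.card ι % 4 = 1)
    (hC : ∀ c ∈ C, Even (hammingNorm c)) (hd : MinDistAtLeast 3 C)
    (hK : 2 ^ Fintype.card ι = 2 * (Fintype.card ι + 3) * #C) :
    #{p ∈ oddFar C ×ˢ evenFar C | hammingDist p.1 p.2 = 1} = #(oddFar C) := by
  have hodd : Odd (Fintype.card ι) := Nat.odd_iff.mpr (by omega)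
  have : Nonempty ι := Fintype.card_pos_iff.mp (by omega)
  have hcard := card_oddFar hC hd hK
  have hflip : ∀ i, #{x ∈ oddFar C | x + (Pi.single i 1 + 1) ∈ oddFar C} + #C * Fintype.card ι
      = 3 * #C + #{y ∈ covered C | y + (Pi.single i 1 + 1) ∈ covered C} := fun i => by
    rw [← card_covered hd, ← hcard]
    refine card_filter_mem_add_card_of_involutive (fun x => add_add_cancel_right_of_zmod_two x _)
      disjoint_oddFar_covered fun x hx => ?_
    rw [oddFar_union_covered hC, mem_filter] at hx ⊢
    refine ⟨mem_univ _, odd_hammingNorm_iff.mpr ?_⟩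
    rw [add_dotProduct, add_dotProduct, single_dotProduct_one, one_dotProduct_one_of_odd hodd,
      CharTwo.add_self_eq_zero, add_zero]
    exact odd_hammingNorm_iff.mp hx.2
  have hsum := sum_congr rfl fun i (_ : i ∈ univ) => hflip i
  rw [sum_add_distrib, sum_add_distrib, sum_const, sum_const, card_univ,
    ← card_adjacent_eq_sum hodd, sum_card_filter_covered hd, smul_eq_mul, smul_eq_mul] at hsum
  have h3 := walkCount_three_one hn hC hd hK
  rw [hcard]
  zify at hsum ⊢
  linear_combination hsum + h3

end Counting

end BinaryCode

open BinaryCode in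
theorem stmt16 (m : ℕ) (hm : 4 ≤ m)
    (C : Finset (Fin (2 ^ m - 3) → ZMod 2))
    (hcard : C.card = 2 ^ (2 ^ m - m - 4))
    (heven : ∀ c ∈ C, Even (hammingNorm c))
    (hdist : ∀ c ∈ C, ∀ c' ∈ C, c ≠ c' → 4 ≤ hammingDist c c') :
    (((Finset.univ.filter fun x : Fin (2 ^ m - 3) → ZMod 2 =>
          Odd (hammingNorm x) ∧ ∀ c ∈ C, 3 ≤ hammingDist x c) ×ˢ
        (Finset.univ.filter fun x : Fin (2 ^ m - 3) → ZMod 2 =>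
          Even (hammingNorm x) ∧ ∀ c ∈ C, 3 ≤ hammingDist x (c + 1))).filter
        fun p => hammingDist p.1 p.2 = 1).card =
      (Finset.univ.filter fun x : Fin (2 ^ m - 3) → ZMod 2 =>
        Odd (hammingNorm x) ∧ ∀ c ∈ C, 3 ≤ hammingDist x c).card := by
  obtain ⟨k, rfl⟩ := Nat.exists_eq_add_of_le hm
  have hk : k < 2 ^ k := Nat.lt_two_pow_self
  have hpow : 2 ^ (4 + k) = 16 * 2 ^ k := by rw [pow_add]; norm_num
  have hn : 2 ^ (4 + k) - 3 = 1 + (4 + k) + (2 ^ (4 + k) - (4 + k) - 4) := by omega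
  refine card_adjacent_oddFar_evenFar (by rw [Fintype.card_fin]; omega) heven
    (fun c hc c' hc' hne => (hdist c hc c' hc' hne).trans' (by norm_num)) ?_
  rw [Fintype.card_fin, hcard, show 2 ^ (4 + k) - 3 + 3 = 2 ^ (4 + k) by omega]
  conv_lhs => rw [hn]
  rw [pow_add, pow_add, pow_one]
end

section
/- Suppose the conflict graph of an even binary (n = 2^m - 3, M = 2^{2^m-m-4}, 4) code C is tripartite with parts D, E, F. Then |D| = |E| = |F| = M, and each of D, E, F is an (n, M, 4) code. -/
/-!
Write `n = 2^m - 3`, `M = |C|`, `V` for the conflict vertices and `W` for the even words outside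
`C`; all `n` neighbours of a word of `V` lie in `W`. Since `2^(n-1) = (n + 3) M` and the radius-one
balls around `C` are disjoint, `|V| = 3M` and `|W| = (n + 2) M`. A word `y ∈ W` has
`n - 2·#{c ∈ C | d(y, c) = 2}` neighbours in `V`, an odd number, and at most one in each part, so
its degree is 1 or 3. For `z ∈ V`, counting walks of length two from `z` shows that the number
`r(z)` of its degree-one neighbours satisfies `r(z) ≡ n - C(n, 2) (mod 3)`, which is nonzero as
`3 ∤ n`; double counting the degree-one words, of which there are `3M = |V|`, gives `r(z) = 1`.
A word of degree three has exactly one neighbour in `D`, so counting the edges between `D` and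
`W` yields `n |D| = |D| + (n - 1) M`, i.e. `|D| = M`.
-/

open Finset Function

section Hamming

variable {ι α : Type*} [Fintype ι] [DecidableEq α]

lemma hammingDist_update_left_add [DecidableEq ι] (x z : ι → α) (i : ι) (a : α) :
    hammingDist (update x i a) z + (if x i ≠ z i then 1 else 0)
      = hammingDist x z + (if a ≠ z i then 1 else 0) := by
  simp only [hammingDist, card_filter]
  rw [← add_sum_erase _ _ (mem_univ i), ← add_sum_erase _ _ (mem_univ i),
    sum_congr rfl fun j hj => by rw [update_of_ne (ne_of_mem_erase hj)], update_self]
  omega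

lemma hammingDist_update_self [DecidableEq ι] (x : ι → α) (i : ι) (a : α) :
    hammingDist x (update x i a) = if a ≠ x i then 1 else 0 := by
  simpa [hammingDist_comm x] using hammingDist_update_left_add x x i a

lemma exists_eq_update_of_hammingDist_eq_one [DecidableEq ι] {x y : ι → α}
    (h : hammingDist x y = 1) :
    ∃ i, y = update x i (y i) := by
  obtain ⟨i, hi⟩ := card_eq_one.mp h
  have hmem : ∀ j, x j ≠ y j ↔ j = i := fun j => by simpa using congr(j ∈ $hi)
  refine ⟨i, funext fun j => ?_⟩
  by_cases hj : j = i
  · subst hj; simp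
  · rw [update_of_ne hj]; exact (not_not.mp (mt (hmem j).1 hj)).symm

lemma card_between [DecidableEq ι] [Fintype α] (x z : ι → α) :
    #{y | hammingDist x y = 1 ∧ hammingDist y z + 1 = hammingDist x z} = hammingDist x z := by
  symm
  refine card_nbij (fun i => update x i (z i)) (fun i hi => ?_) (fun i hi j _ h => ?_)
    fun y hy => ?_
  · have hi : x i ≠ z i := by simpa using hi
    have h := hammingDist_update_left_add x z i (z i)
    simp only [ne_eq, not_true_eq_false, if_false, hi, not_false_eq_true, if_true] at h
    simp only [coe_filter, Set.mem_ofPred_eq, hammingDist_update_self, mem_univ, true_and]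
    exact ⟨if_pos (Ne.symm hi), by omega⟩
  · by_contra hij
    have hi : x i ≠ z i := by simpa using hi
    exact hi (by simpa [update_of_ne hij] using (congrFun h i).symm)
  · obtain ⟨hxy, hyz⟩ : hammingDist x y = 1 ∧ hammingDist y z + 1 = hammingDist x z := by
      simpa using hy
    obtain ⟨i, hyi⟩ := exists_eq_update_of_hammingDist_eq_one hxy
    have h := hammingDist_update_left_add x z i (y i)
    rw [← hyi] at h
    have hi : x i ≠ z i ∧ y i = z i := by
      by_contra hne
      split_ifs at h <;> grind
    exact ⟨i, by simpa using hi.1, by rw [hyi, hi.2]⟩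

def neighborsIn (S : Finset (ι → α)) (y : ι → α) : Finset (ι → α) :=
  {z ∈ S | hammingDist y z = 1}

lemma mem_neighborsIn {S : Finset (ι → α)} {y z : ι → α} :
    z ∈ neighborsIn S y ↔ z ∈ S ∧ hammingDist y z = 1 :=
  mem_filter

lemma sum_card_neighborsIn_comm (S T : Finset (ι → α)) :
    ∑ y ∈ S, #(neighborsIn T y) = ∑ z ∈ T, #(neighborsIn S z) := by
  simp only [neighborsIn, card_filter]
  rw [sum_comm]
  exact sum_congr rfl fun z _ => sum_congr rfl fun y _ => by rw [hammingDist_comm]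

lemma card_neighborsIn_le_one {S : Finset (ι → α)}
    (hS : (S : Set (ι → α)).Pairwise (3 ≤ hammingDist · ·)) (y : ι → α) :
    #(neighborsIn S y) ≤ 1 := by
  refine card_le_one.2 fun z hz z' hz' => ?_
  rw [mem_neighborsIn] at hz hz'
  by_contra hne
  have := hammingDist_triangle_left z z' y
  linarith [hS hz.1 hz'.1 hne]

lemma pairwiseDisjoint_neighborsIn {C : Finset (ι → α)}
    (hC : (C : Set (ι → α)).Pairwise (3 ≤ hammingDist · ·)) (S : Finset (ι → α)) :
    (C : Set (ι → α)).PairwiseDisjoint (neighborsIn S) := by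
  intro c hc c' hc' hne
  refine disjoint_left.2 fun x hx hx' => ?_
  rw [mem_neighborsIn] at hx hx'
  have := hammingDist_triangle c x c'
  linarith [hC hc hc' hne, hammingDist_comm x c']

lemma card_neighborsIn_sphere [DecidableEq ι] [Fintype α] {u c : ι → α} {k : ℕ}
    (hc : hammingDist u c = k + 1) :
    #(neighborsIn {x | hammingDist u x = k} c) = k + 1 := by
  conv_rhs => rw [← hc, hammingDist_comm, ← card_between c u]
  refine congrArg card (ext fun x => ?_)
  simp only [neighborsIn, mem_filter, mem_univ, true_and, hammingDist_comm u x,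
    hammingDist_comm u c] at hc ⊢
  omega

lemma card_neighborsIn_union_le (D E F : Finset (ι → α)) (y : ι → α) :
    #(neighborsIn (D ∪ E ∪ F) y)
      ≤ #(neighborsIn D y) + #(neighborsIn E y) + #(neighborsIn F y) := by
  simp only [neighborsIn, filter_union]
  exact (card_union_le _ _).trans (Nat.add_le_add_right (card_union_le _ _) _)

lemma card_neighborsIn_union_le_three {D E F : Finset (ι → α)}
    (hD : (D : Set (ι → α)).Pairwise (3 ≤ hammingDist · ·))
    (hE : (E : Set (ι → α)).Pairwise (3 ≤ hammingDist · ·))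
    (hF : (F : Set (ι → α)).Pairwise (3 ≤ hammingDist · ·)) (y : ι → α) :
    #(neighborsIn (D ∪ E ∪ F) y) ≤ 3 := by
  linarith [card_neighborsIn_union_le D E F y, card_neighborsIn_le_one hD y,
    card_neighborsIn_le_one hE y, card_neighborsIn_le_one hF y]

lemma card_neighborsIn_eq_one_of_card_neighborsIn_union_eq_three {D E F : Finset (ι → α)}
    (hD : (D : Set (ι → α)).Pairwise (3 ≤ hammingDist · ·))
    (hE : (E : Set (ι → α)).Pairwise (3 ≤ hammingDist · ·))
    (hF : (F : Set (ι → α)).Pairwise (3 ≤ hammingDist · ·)) {y : ι → α}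
    (hy : #(neighborsIn (D ∪ E ∪ F) y) = 3) : #(neighborsIn D y) = 1 := by
  linarith [card_neighborsIn_union_le D E F y, card_neighborsIn_le_one hD y,
    card_neighborsIn_le_one hE y, card_neighborsIn_le_one hF y]

end Hamming

section Binary

variable {ι : Type*} [Fintype ι]

lemma natCast_hammingNorm (x : ι → ZMod 2) : (hammingNorm x : ZMod 2) = ∑ i, x i := by
  have h : ∀ a : ZMod 2, a = if a ≠ 0 then 1 else 0 := by decide
  rw [hammingNorm, ← sum_boole]
  exact sum_congr rfl fun i _ => (h (x i)).symm

lemma hammingDist_mod_two (x y : ι → ZMod 2) :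
    hammingDist x y % 2 = (hammingNorm x + hammingNorm y) % 2 := by
  have h : ∀ a b : ZMod 2, -a + b = a + b := by decide
  rw [← ZMod.natCast_eq_natCast_iff', Nat.cast_add, hammingDist_eq_hammingNorm,
    natCast_hammingNorm, natCast_hammingNorm, natCast_hammingNorm, ← sum_add_distrib]
  exact sum_congr rfl fun i _ => h (x i) (y i)

variable [DecidableEq ι]

lemma card_hammingDist_eq (x : ι → ZMod 2) (k : ℕ) :
    #{y | hammingDist x y = k} = (Fintype.card ι).choose k := by
  have hflip : ∀ a b : ZMod 2, a ≠ b ↔ b = a + 1 := by decide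
  rw [← card_univ, ← card_powersetCard]
  refine card_nbij' (fun y => ({i | x i ≠ y i} : Finset ι))
    (fun S i => if i ∈ S then x i + 1 else x i)
    (fun y hy => by simpa [hammingDist] using hy) (fun S hS => ?_) (fun y _ => ?_) fun S _ => ?_
  · simp only [mem_coe, mem_powersetCard, subset_univ, true_and] at hS
    simp only [coe_filter, mem_univ, true_and, Set.mem_ofPred_eq, hammingDist]
    convert hS using 2
    ext i
    by_cases hi : i ∈ S <;> simp [hi, (hflip _ _).2]
  · funext i
    by_cases hi : x i = y i
    · simp [hi]
    · simpa [hi] using ((hflip _ _).1 hi).symm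
  · ext i
    by_cases hi : i ∈ S <;> simp [hi, (hflip _ _).2]

lemma card_neighborsIn_univ (z : ι → ZMod 2) : #(neighborsIn univ z) = Fintype.card ι := by
  simpa [neighborsIn] using card_hammingDist_eq z 1

lemma card_common_neighbors (z z' : ι → ZMod 2) :
    #{y | hammingDist z y = 1 ∧ hammingDist y z' = 1}
      = (if z = z' then Fintype.card ι else 0) + if hammingDist z z' = 2 then 2 else 0 := by
  by_cases heq : z = z'
  · subst heq
    simp only [hammingDist_comm _ z, and_self, if_true, hammingDist_self]
    simpa using card_hammingDist_eq z 1
  by_cases h2 : hammingDist z z' = 2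
  · simp only [heq, h2, if_true, if_false, zero_add]
    conv_rhs => rw [← h2, ← card_between z z']
    exact congrArg card (filter_congr fun y _ => by omega)
  · simp only [heq, h2, if_false, add_zero, card_eq_zero, filter_eq_empty_iff, mem_univ,
      true_implies, not_and]
    intro y h1 h1'
    have := hammingDist_triangle z y z'
    have := hammingDist_mod_two z y
    have := hammingDist_mod_two y z'
    have := hammingDist_mod_two z z'
    have := hammingDist_ne_zero.2 heq
    omega

lemma sum_card_neighborsIn_neighborsIn (S : Finset (ι → ZMod 2)) {z : ι → ZMod 2} (hz : z ∈ S) :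
    ∑ y ∈ neighborsIn univ z, #(neighborsIn S y)
      = Fintype.card ι + 2 * #{z' ∈ S | hammingDist z z' = 2} := by
  rw [sum_card_neighborsIn_comm]
  have hcommon : ∀ z' ∈ S, #(neighborsIn (neighborsIn univ z) z')
      = #{y | hammingDist z y = 1 ∧ hammingDist y z' = 1} := fun z' _ => by
    congr 1; ext y; simp [neighborsIn, hammingDist_comm z']
  rw [sum_congr rfl hcommon, sum_congr rfl fun z' _ => card_common_neighbors z z',
    sum_add_distrib, sum_ite_eq, if_pos hz, sum_ite, sum_const, sum_const_zero, smul_eq_mul,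
    add_zero, mul_comm]

lemma card_filter_even_hammingNorm_eq_card_filter_odd [Nonempty ι] :
    #{x : ι → ZMod 2 | Even (hammingNorm x)} = #{x : ι → ZMod 2 | Odd (hammingNorm x)} := by
  obtain ⟨i⟩ := ‹Nonempty ι›
  have hflip : ∀ x : ι → ZMod 2, hammingDist x (update x i (x i + 1)) = 1 := fun x => by
    have : ∀ a : ZMod 2, a + 1 ≠ a := by decide
    rw [hammingDist_update_self, if_pos (this _)]
  have hinv : ∀ x : ι → ZMod 2, update (update x i (x i + 1)) i (update x i (x i + 1) i + 1) = x :=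
    fun x => by
      have : ∀ a : ZMod 2, a + 1 + 1 = a := by decide
      simp [this]
  refine card_nbij' (fun x => update x i (x i + 1)) (fun x => update x i (x i + 1))
    (fun x hx => ?_) (fun x hx => ?_) (fun x _ => hinv x) fun x _ => hinv x
  all_goals
    have := hammingDist_mod_two x (update x i (x i + 1))
    simp only [coe_filter, mem_univ, true_and, Set.mem_ofPred_eq, Nat.even_iff, Nat.odd_iff,
      hflip] at hx this ⊢
    omega

lemma card_filter_odd_hammingNorm [Nonempty ι] :
    #{x : ι → ZMod 2 | Odd (hammingNorm x)} = 2 ^ (Fintype.card ι - 1) := by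
  have h := card_filter_add_card_filter_not (s := univ)
    (p := fun x : ι → ZMod 2 => Even (hammingNorm x))
  simp only [Nat.not_even_iff_odd, card_univ, Fintype.card_fun, ZMod.card,
    card_filter_even_hammingNorm_eq_card_filter_odd] at h
  have : 2 ^ Fintype.card ι = 2 * 2 ^ (Fintype.card ι - 1) := by
    rw [← pow_succ', Nat.sub_add_cancel Fintype.card_pos]
  omega

lemma card_filter_even_hammingNorm [Nonempty ι] :
    #{x : ι → ZMod 2 | Even (hammingNorm x)} = 2 ^ (Fintype.card ι - 1) := by
  rw [card_filter_even_hammingNorm_eq_card_filter_odd, card_filter_odd_hammingNorm]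

end Binary

lemma three_dvd_of_choose_two_modEq_self {n : ℕ} (h : n.choose 2 ≡ n [MOD 3]) : 3 ∣ n := by
  obtain _ | m := n
  · exact dvd_zero 3
  have hmul := congrArg (Nat.cast : ℕ → ZMod 3) (Nat.add_one_mul_choose_eq m 1)
  have hmod := (ZMod.natCast_eq_natCast_iff _ _ _).2 h
  push_cast [Nat.choose_one_right] at hmul hmod
  have key : ∀ a c : ZMod 3, (a + 1) * a = c * 2 → c = a + 1 → a + 1 = 0 := by decide
  exact (ZMod.natCast_eq_zero_iff _ _).1 (by push_cast; exact key _ _ hmul hmod)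

lemma odd_of_add_three_dvd_two_pow {n k : ℕ} (h : n + 3 ∣ 2 ^ k) : Odd n := by
  obtain ⟨j, -, hj⟩ := (Nat.dvd_prime_pow Nat.prime_two).1 h
  obtain _ | j := j
  · simp at hj
  · rw [pow_succ] at hj
    rw [Nat.odd_iff]
    omega

lemma not_three_dvd_of_add_three_dvd_two_pow {n k : ℕ} (h : n + 3 ∣ 2 ^ k) : ¬ 3 ∣ n := by
  intro h3
  obtain ⟨j, -, hj⟩ := (Nat.dvd_prime_pow Nat.prime_two).1 h
  have : 3 ∣ 2 ^ j := hj ▸ dvd_add h3 dvd_rfl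
  exact absurd (Nat.prime_three.dvd_of_dvd_pow this) (by norm_num)

lemma sum_add_two_mul_card_filter_eq_one {α : Type*} (s : Finset α) (f : α → ℕ)
    (hf : ∀ a ∈ s, f a = 1 ∨ f a = 3) : ∑ a ∈ s, f a + 2 * #{a ∈ s | f a = 1} = 3 * #s := by
  rw [card_filter, mul_sum, card_eq_sum_ones, mul_sum, ← sum_add_distrib]
  refine sum_congr rfl fun a ha => ?_
  rcases hf a ha with h | h <;> simp [h]

section ConflictGraph

variable {ι : Type*} [Fintype ι] [DecidableEq ι]

def conflictVertices (C : Finset (ι → ZMod 2)) : Finset (ι → ZMod 2) :=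
  {x | Odd (hammingNorm x) ∧ ∀ c ∈ C, 3 ≤ hammingDist x c}

def evenNoncodewords (C : Finset (ι → ZMod 2)) : Finset (ι → ZMod 2) :=
  {y | Even (hammingNorm y) ∧ y ∉ C}

variable {C D E F : Finset (ι → ZMod 2)}

lemma mem_conflictVertices {x : ι → ZMod 2} :
    x ∈ conflictVertices C ↔ Odd (hammingNorm x) ∧ ∀ c ∈ C, 3 ≤ hammingDist x c := by
  simp [conflictVertices]

lemma mem_evenNoncodewords {y : ι → ZMod 2} :
    y ∈ evenNoncodewords C ↔ Even (hammingNorm y) ∧ y ∉ C := by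
  simp [evenNoncodewords]

lemma card_evenNoncodewords_add (heven : ∀ c ∈ C, Even (hammingNorm c)) :
    #(evenNoncodewords C) + #C = #{x : ι → ZMod 2 | Even (hammingNorm x)} := by
  rw [← card_filter_add_card_filter_not (s := {x | Even (hammingNorm x)}) (p := (· ∉ C)),
    filter_filter]
  congr 2
  ext y
  simp only [mem_filter, mem_univ, true_and, not_not]
  exact ⟨fun h => ⟨heven y h, h⟩, fun h => h.2⟩

lemma card_conflictVertices_add (heven : ∀ c ∈ C, Even (hammingNorm c))
    (hC : (C : Set (ι → ZMod 2)).Pairwise (3 ≤ hammingDist · ·)) :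
    #(conflictVertices C) + #C * Fintype.card ι = #{x : ι → ZMod 2 | Odd (hammingNorm x)} := by
  have hnear : {x ∈ ({x | Odd (hammingNorm x)} : Finset (ι → ZMod 2)) |
      ¬ ∀ c ∈ C, 3 ≤ hammingDist x c} = C.biUnion (neighborsIn univ) := by
    ext x
    simp only [mem_filter, mem_univ, true_and, mem_biUnion, mem_neighborsIn, not_forall, not_le,
      exists_prop]
    constructor
    · rintro ⟨hx, c, hc, hlt⟩
      have := hammingDist_mod_two x c
      have := heven c hc
      rw [Nat.odd_iff] at hx; rw [Nat.even_iff] at this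
      exact ⟨c, hc, by rw [hammingDist_comm]; omega⟩
    · rintro ⟨c, hc, hcx⟩
      have := hammingDist_mod_two c x
      have := heven c hc
      rw [Nat.odd_iff]; rw [Nat.even_iff] at this
      exact ⟨by omega, c, hc, by rw [hammingDist_comm]; omega⟩
  rw [← card_filter_add_card_filter_not (s := {x | Odd (hammingNorm x)})
    (p := fun x => ∀ c ∈ C, 3 ≤ hammingDist x c), hnear,
    card_biUnion (pairwiseDisjoint_neighborsIn hC univ), sum_congr rfl fun c _ =>
    card_neighborsIn_univ c, sum_const, smul_eq_mul, filter_filter]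
  rfl

lemma card_filter_conflictVertices_add (heven : ∀ c ∈ C, Even (hammingNorm c))
    (hC : (C : Set (ι → ZMod 2)).Pairwise (3 ≤ hammingDist · ·)) (u : ι → ZMod 2) (k : ℕ)
    (hu : Odd (hammingNorm u + k)) (hfar : ∀ c ∈ C, k + 1 ≤ hammingDist u c) :
    #{x ∈ conflictVertices C | hammingDist u x = k}
      + (k + 1) * #{c ∈ C | hammingDist u c = k + 1} = (Fintype.card ι).choose k := by
  set T : Finset (ι → ZMod 2) := {x | hammingDist u x = k}
  have hnear : {x ∈ T | x ∉ conflictVertices C}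
      = {c ∈ C | hammingDist u c = k + 1}.biUnion (neighborsIn T) := by
    ext x
    simp only [T, mem_filter, mem_univ, true_and, mem_biUnion, mem_neighborsIn,
      mem_conflictVertices, not_and, not_forall, not_le, exists_prop]
    have hx := hammingDist_mod_two u x
    rw [Nat.odd_iff] at hu ⊢
    constructor
    · rintro ⟨hux, hfarx⟩
      obtain ⟨c, hc, hlt⟩ := hfarx (by omega)
      have := hammingDist_mod_two x c
      have hc' := heven c hc
      rw [Nat.even_iff] at hc'
      have hxc : hammingDist x c = 1 := by omega
      have := hammingDist_triangle u x c
      exact ⟨c, ⟨hc, by linarith [hfar c hc]⟩, hux, by rw [hammingDist_comm, hxc]⟩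
    · rintro ⟨c, ⟨hc, -⟩, hux, hcx⟩
      exact ⟨hux, fun _ => ⟨c, hc, by rw [hammingDist_comm]; omega⟩⟩
  rw [← card_hammingDist_eq u k, ← card_filter_add_card_filter_not (s := T)
    (p := (· ∈ conflictVertices C)), hnear, card_biUnion ((pairwiseDisjoint_neighborsIn hC T).subset
    (coe_subset.2 (filter_subset _ _))), sum_congr rfl fun c hc =>
    card_neighborsIn_sphere (mem_filter.1 hc).2, sum_const, smul_eq_mul, mul_comm]
  congr 2
  ext x
  simp [T, and_comm]

lemma neighborsIn_evenNoncodewords {z : ι → ZMod 2} (hz : z ∈ conflictVertices C) :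
    neighborsIn (evenNoncodewords C) z = neighborsIn univ z := by
  rw [mem_conflictVertices, Nat.odd_iff] at hz
  ext y
  simp only [mem_neighborsIn, mem_evenNoncodewords, mem_univ, true_and, Nat.even_iff,
    and_iff_right_iff_imp]
  intro hzy
  have := hammingDist_mod_two z y
  exact ⟨by omega, fun hy => by linarith [hz.2 y hy]⟩

def degreeOneWords (C : Finset (ι → ZMod 2)) : Finset (ι → ZMod 2) :=
  {y ∈ evenNoncodewords C | #(neighborsIn (conflictVertices C) y) = 1}

lemma card_conflictVertices [Nonempty ι] (heven : ∀ c ∈ C, Even (hammingNorm c))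
    (hC : (C : Set (ι → ZMod 2)).Pairwise (3 ≤ hammingDist · ·))
    (hcount : 2 ^ (Fintype.card ι - 1) = #C * (Fintype.card ι + 3)) :
    #(conflictVertices C) = 3 * #C := by
  have := card_conflictVertices_add heven hC
  rw [card_filter_odd_hammingNorm, hcount] at this
  linarith

lemma card_evenNoncodewords [Nonempty ι] (heven : ∀ c ∈ C, Even (hammingNorm c))
    (hcount : 2 ^ (Fintype.card ι - 1) = #C * (Fintype.card ι + 3)) :
    #(evenNoncodewords C) = #C * (Fintype.card ι + 2) := by
  have := card_evenNoncodewords_add heven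
  rw [card_filter_even_hammingNorm, hcount] at this
  linarith

lemma card_degreeOneWords [Nonempty ι] (heven : ∀ c ∈ C, Even (hammingNorm c))
    (hC : (C : Set (ι → ZMod 2)).Pairwise (3 ≤ hammingDist · ·))
    (hcount : 2 ^ (Fintype.card ι - 1) = #C * (Fintype.card ι + 3))
    (hs : ∀ y ∈ evenNoncodewords C, #(neighborsIn (conflictVertices C) y) = 1 ∨
      #(neighborsIn (conflictVertices C) y) = 3) :
    #(degreeOneWords C) = 3 * #C := by
  have hsum : ∑ y ∈ evenNoncodewords C, #(neighborsIn (conflictVertices C) y)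
      = 3 * #C * Fintype.card ι := by
    rw [sum_card_neighborsIn_comm, sum_congr rfl fun z hz => by
      rw [neighborsIn_evenNoncodewords hz, card_neighborsIn_univ], sum_const, smul_eq_mul,
      card_conflictVertices heven hC hcount]
  have := sum_add_two_mul_card_filter_eq_one _ _ hs
  rw [hsum, card_evenNoncodewords heven hcount] at this
  rw [degreeOneWords]
  linarith

lemma one_le_card_neighborsIn_degreeOneWords (heven : ∀ c ∈ C, Even (hammingNorm c))
    (hC : (C : Set (ι → ZMod 2)).Pairwise (3 ≤ hammingDist · ·)) (h3 : ¬ 3 ∣ Fintype.card ι)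
    (hs : ∀ y ∈ evenNoncodewords C, #(neighborsIn (conflictVertices C) y) = 1 ∨
      #(neighborsIn (conflictVertices C) y) = 3)
    {z : ι → ZMod 2} (hz : z ∈ conflictVertices C) :
    1 ≤ #(neighborsIn (degreeOneWords C) z) := by
  have hnbrs := neighborsIn_evenNoncodewords hz
  have hdeg := sum_add_two_mul_card_filter_eq_one (neighborsIn (evenNoncodewords C) z)
    (fun y => #(neighborsIn (conflictVertices C) y)) fun y hy => hs y (mem_neighborsIn.1 hy).1
  have hone : {y ∈ neighborsIn (evenNoncodewords C) z |
      #(neighborsIn (conflictVertices C) y) = 1} = neighborsIn (degreeOneWords C) z := by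
    ext y; simp only [degreeOneWords, mem_filter, mem_neighborsIn]; tauto
  rw [hone, hnbrs, card_neighborsIn_univ, sum_card_neighborsIn_neighborsIn _ hz] at hdeg
  rw [mem_conflictVertices] at hz
  have hdist2 := card_filter_conflictVertices_add heven hC z 2 (hz.1.add_even even_two)
    fun c hc => hz.2 c hc
  -- With `r` the count in the goal and `w = #{z' ∈ V | d(z, z') = 2}`, `hdeg` reads
  -- `n + 2w + 2r = 3n` and `hdist2` reads `w + 3·#{c ∈ C | d(z, c) = 3} = C(n, 2)`.
  refine Nat.one_le_iff_ne_zero.2 fun h0 => h3 (three_dvd_of_choose_two_modEq_self ?_)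
  rw [Nat.ModEq]
  omega

lemma card_neighborsIn_degreeOneWords [Nonempty ι] (heven : ∀ c ∈ C, Even (hammingNorm c))
    (hC : (C : Set (ι → ZMod 2)).Pairwise (3 ≤ hammingDist · ·))
    (hcount : 2 ^ (Fintype.card ι - 1) = #C * (Fintype.card ι + 3))
    (hs : ∀ y ∈ evenNoncodewords C, #(neighborsIn (conflictVertices C) y) = 1 ∨
      #(neighborsIn (conflictVertices C) y) = 3)
    {z : ι → ZMod 2} (hz : z ∈ conflictVertices C) :
    #(neighborsIn (degreeOneWords C) z) = 1 := by
  have h3 := not_three_dvd_of_add_three_dvd_two_pow (Dvd.intro_left _ hcount.symm)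
  have hsum : ∑ z ∈ conflictVertices C, 1 = ∑ z ∈ conflictVertices C,
      #(neighborsIn (degreeOneWords C) z) := by
    rw [← sum_card_neighborsIn_comm,
      sum_congr rfl (g := fun _ => 1) fun y (hy : y ∈ degreeOneWords C) => (mem_filter.1 hy).2,
      ← card_eq_sum_ones, ← card_eq_sum_ones, card_degreeOneWords heven hC hcount hs,
      card_conflictVertices heven hC hcount]
  exact ((sum_eq_sum_iff_of_le fun z hz =>
    one_le_card_neighborsIn_degreeOneWords heven hC h3 hs hz).1 hsum z hz).symm

lemma card_neighborsIn_conflictVertices_eq_one_or_three (heven : ∀ c ∈ C, Even (hammingNorm c))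
    (hC : (C : Set (ι → ZMod 2)).Pairwise (3 ≤ hammingDist · ·)) (hN : Odd (Fintype.card ι))
    (hcover : D ∪ E ∪ F = conflictVertices C)
    (hD : (D : Set (ι → ZMod 2)).Pairwise (3 ≤ hammingDist · ·))
    (hE : (E : Set (ι → ZMod 2)).Pairwise (3 ≤ hammingDist · ·))
    (hF : (F : Set (ι → ZMod 2)).Pairwise (3 ≤ hammingDist · ·))
    {y : ι → ZMod 2} (hy : y ∈ evenNoncodewords C) :
    #(neighborsIn (conflictVertices C) y) = 1 ∨ #(neighborsIn (conflictVertices C) y) = 3 := by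
  rw [mem_evenNoncodewords] at hy
  have hfar : ∀ c ∈ C, 1 + 1 ≤ hammingDist y c := fun c hc => by
    have := hammingDist_mod_two y c
    have := heven c hc
    have : hammingDist y c ≠ 0 := hammingDist_ne_zero.2 (by rintro rfl; exact hy.2 hc)
    rw [Nat.even_iff] at *
    omega
  have h := card_filter_conflictVertices_add heven hC y 1 (hy.1.add_odd odd_one) hfar
  have hle := card_neighborsIn_union_le_three hD hE hF y
  rw [Nat.choose_one_right] at h
  rw [hcover] at hle
  rw [Nat.odd_iff] at hN
  change #(neighborsIn _ y) + _ = _ at h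
  omega

lemma card_mul_card_eq_card_add_card_filter [Nonempty ι]
    (heven : ∀ c ∈ C, Even (hammingNorm c))
    (hC : (C : Set (ι → ZMod 2)).Pairwise (3 ≤ hammingDist · ·))
    (hcount : 2 ^ (Fintype.card ι - 1) = #C * (Fintype.card ι + 3))
    (hs : ∀ y ∈ evenNoncodewords C, #(neighborsIn (conflictVertices C) y) = 1 ∨
      #(neighborsIn (conflictVertices C) y) = 3)
    (hcover : D ∪ E ∪ F = conflictVertices C)
    (hD : (D : Set (ι → ZMod 2)).Pairwise (3 ≤ hammingDist · ·))
    (hE : (E : Set (ι → ZMod 2)).Pairwise (3 ≤ hammingDist · ·))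
    (hF : (F : Set (ι → ZMod 2)).Pairwise (3 ≤ hammingDist · ·)) :
    #D * Fintype.card ι
      = #D + #{y ∈ evenNoncodewords C | ¬ #(neighborsIn (conflictVertices C) y) = 1} := by
  have hDV : D ⊆ conflictVertices C := hcover ▸ subset_union_left.trans subset_union_left
  calc #D * Fintype.card ι = ∑ y ∈ evenNoncodewords C, #(neighborsIn D y) := by
        rw [sum_card_neighborsIn_comm, sum_congr rfl fun z hz => by
          rw [neighborsIn_evenNoncodewords (hDV hz), card_neighborsIn_univ], sum_const,
          smul_eq_mul]
    _ = ∑ y ∈ degreeOneWords C, #(neighborsIn D y) + ∑ y ∈ evenNoncodewords C with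
          ¬ #(neighborsIn (conflictVertices C) y) = 1, #(neighborsIn D y) :=
        (sum_filter_add_sum_filter_not _ _ _).symm
    _ = #D + #{y ∈ evenNoncodewords C | ¬ #(neighborsIn (conflictVertices C) y) = 1} := by
        rw [sum_card_neighborsIn_comm, sum_congr rfl fun z hz =>
          card_neighborsIn_degreeOneWords heven hC hcount hs (hDV hz), sum_const, smul_eq_mul,
          mul_one]
        congr 1
        rw [card_eq_sum_ones]
        refine sum_congr rfl fun y hy => ?_
        obtain ⟨hyW, hy1⟩ := mem_filter.1 hy
        refine card_neighborsIn_eq_one_of_card_neighborsIn_union_eq_three hD hE hF ?_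
        rw [hcover]
        exact (hs y hyW).resolve_left hy1

theorem card_eq_card_of_union_eq_conflictVertices (heven : ∀ c ∈ C, Even (hammingNorm c))
    (hC : (C : Set (ι → ZMod 2)).Pairwise (3 ≤ hammingDist · ·))
    (hcount : 2 ^ (Fintype.card ι - 1) = #C * (Fintype.card ι + 3))
    (hcover : D ∪ E ∪ F = conflictVertices C)
    (hD : (D : Set (ι → ZMod 2)).Pairwise (3 ≤ hammingDist · ·))
    (hE : (E : Set (ι → ZMod 2)).Pairwise (3 ≤ hammingDist · ·))
    (hF : (F : Set (ι → ZMod 2)).Pairwise (3 ≤ hammingDist · ·)) :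
    #D = #C := by
  have hN := odd_of_add_three_dvd_two_pow (Dvd.intro_left _ hcount.symm)
  have : Nonempty ι := Fintype.card_pos_iff.1 hN.pos
  have hs := fun y (hy : y ∈ evenNoncodewords C) =>
    card_neighborsIn_conflictVertices_eq_one_or_three heven hC hN hcover hD hE hF hy
  have hedges := card_mul_card_eq_card_add_card_filter heven hC hcount hs hcover hD hE hF
  have hsplit := card_filter_add_card_filter_not (s := evenNoncodewords C)
    (p := fun y => #(neighborsIn (conflictVertices C) y) = 1)
  rw [← degreeOneWords, card_degreeOneWords heven hC hcount hs,
    card_evenNoncodewords heven hcount] at hsplit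
  have hN1 : Fintype.card ι ≠ 1 := fun h => by simp [h] at hcount; omega
  have key : ((#D : ℤ) - #C) * ((Fintype.card ι : ℤ) - 1) = 0 := by
    zify at hedges hsplit
    linear_combination hedges + hsplit
  rcases mul_eq_zero.1 key with h | h
  · omega
  · exact absurd (by linarith) hN1

end ConflictGraph

theorem stmt18_general (m : ℕ) (hm : 4 ≤ m)
    (C : Finset (Fin (2 ^ m - 3) → ZMod 2))
    (hcard : C.card = 2 ^ (2 ^ m - m - 4))
    (heven : ∀ c ∈ C, Even (hammingNorm c))
    (hdist : ∀ c ∈ C, ∀ c' ∈ C, c ≠ c' → 4 ≤ hammingDist c c')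
    (D E F : Finset (Fin (2 ^ m - 3) → ZMod 2))
    (hcover : D ∪ E ∪ F = Finset.univ.filter fun x : Fin (2 ^ m - 3) → ZMod 2 =>
      Odd (hammingNorm x) ∧ ∀ c ∈ C, 3 ≤ hammingDist x c)
    (hD : ∀ c ∈ D, ∀ c' ∈ D, c ≠ c' → 4 ≤ hammingDist c c')
    (hE : ∀ c ∈ E, ∀ c' ∈ E, c ≠ c' → 4 ≤ hammingDist c c')
    (hF : ∀ c ∈ F, ∀ c' ∈ F, c ≠ c' → 4 ≤ hammingDist c c') :
    D.card = 2 ^ (2 ^ m - m - 4) ∧ E.card = 2 ^ (2 ^ m - m - 4) ∧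
      F.card = 2 ^ (2 ^ m - m - 4) := by
  have hcount : 2 ^ (Fintype.card (Fin (2 ^ m - 3)) - 1)
      = #C * (Fintype.card (Fin (2 ^ m - 3)) + 3) := by
    have h16 : 2 ^ m = 2 ^ (m - 4) * 16 := by rw [← pow_sub_mul_pow 2 hm]; rfl
    have := Nat.lt_two_pow_self (n := m - 4)
    rw [Fintype.card_fin, hcard, Nat.sub_add_cancel (by omega), ← pow_add]
    congr 1
    omega
  have dist_three {S : Finset (Fin (2 ^ m - 3) → ZMod 2)}
      (hS : ∀ c ∈ S, ∀ c' ∈ S, c ≠ c' → 4 ≤ hammingDist c c') :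
      (S : Set (Fin (2 ^ m - 3) → ZMod 2)).Pairwise (3 ≤ hammingDist · ·) :=
    fun c hc c' hc' hne => (hS c hc c' hc' hne).trans' (by norm_num)
  have hcover' : D ∪ E ∪ F = conflictVertices C := hcover
  rw [← hcard]
  refine ⟨card_eq_card_of_union_eq_conflictVertices heven (dist_three hdist) hcount hcover'
    (dist_three hD) (dist_three hE) (dist_three hF),
    card_eq_card_of_union_eq_conflictVertices heven (dist_three hdist) hcount
      (by rwa [union_comm E D]) (dist_three hE) (dist_three hD) (dist_three hF),
    card_eq_card_of_union_eq_conflictVertices heven (dist_three hdist) hcount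
      (by rw [← hcover', union_comm (D ∪ E) F, union_assoc]) (dist_three hF) (dist_three hD)
      (dist_three hE)⟩

theorem stmt18 (m : ℕ) (hm : 4 ≤ m)
    (C : Finset (Fin (2 ^ m - 3) → ZMod 2))
    (hcard : C.card = 2 ^ (2 ^ m - m - 4))
    (heven : ∀ c ∈ C, Even (hammingNorm c))
    (hdist : ∀ c ∈ C, ∀ c' ∈ C, c ≠ c' → 4 ≤ hammingDist c c')
    (D E F : Finset (Fin (2 ^ m - 3) → ZMod 2))
    (hcover : D ∪ E ∪ F = Finset.univ.filter fun x : Fin (2 ^ m - 3) → ZMod 2 =>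
      Odd (hammingNorm x) ∧ ∀ c ∈ C, 3 ≤ hammingDist x c)
    (hDE : Disjoint D E) (hDF : Disjoint D F) (hEF : Disjoint E F)
    (hD : ∀ c ∈ D, ∀ c' ∈ D, c ≠ c' → 4 ≤ hammingDist c c')
    (hE : ∀ c ∈ E, ∀ c' ∈ E, c ≠ c' → 4 ≤ hammingDist c c')
    (hF : ∀ c ∈ F, ∀ c' ∈ F, c ≠ c' → 4 ≤ hammingDist c c') :
    D.card = 2 ^ (2 ^ m - m - 4) ∧ E.card = 2 ^ (2 ^ m - m - 4) ∧
      F.card = 2 ^ (2 ^ m - m - 4) :=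
  stmt18_general m hm C hcard heven hdist D E F hcover hD hE hF
end
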